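/- Let T = (S,Σ,κ) be an STS, μ a probability measure on S, and B ∈ Σ with avoid-set B̃ (and B̃̃ the avoid-set of B̃). Then: (i) if T is D(μ,B), then Prob_μ(F B) = 1 if and only if Prob_μ((S∖B) U B̃) = 0; (ii) if T is SD(μ,B), then Prob_μ(GF B) = 1 if and only if Prob_μ(F B̃) = 0; (iii) if T is D(μ,B̃) and PD(μ,B), then Prob_μ(GF B) > 0 if and only if Prob_μ(F B̃̃) > 0. -/

import Mathlib

open MeasureTheory ProbabilityTheory ENNReal Filter Topology

namespace STS

variable {S : Type*} [MeasurableSpace S]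

/-- Probability of the cylinder `Cyl(A 0, …, A n)` for the Markov chain with kernel `κ`
and initial distribution `μ`. -/
noncomputable def cylProb (κ : Kernel S S) : ℕ → Measure S → (ℕ → Set S) → ℝ≥0∞
  | 0, μ, A => μ (A 0)
  | n + 1, μ, A => ∫⁻ s in A 0, cylProb κ n (κ s) (fun i => A (i + 1)) ∂μ

/-- `P` assigns to each initial (probability) distribution the path measure (on `ℕ → S`,
with the product σ-algebra) of the time-homogeneous Markov chain with transition kernel `κ`,
as given by the Ionescu–Tulcea construction: it is the unique probability measure giving
cylinders their prescribed probabilities. -/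
def IsPathMeasure (κ : Kernel S S) (P : Measure S → Measure (ℕ → S)) : Prop :=
  ∀ μ : Measure S, IsProbabilityMeasure μ →
    IsProbabilityMeasure (P μ) ∧
    ∀ (n : ℕ) (A : ℕ → Set S), (∀ i, MeasurableSet (A i)) →
      P μ {ρ | ∀ i ≤ n, ρ i ∈ A i} = cylProb κ n μ A

/-- The path event `F B`: eventually reach `B`. -/
def evF (B : Set S) : Set (ℕ → S) := {ρ | ∃ k, ρ k ∈ B}

/-- The path event `F≤n B`. -/
def evFle (n : ℕ) (B : Set S) : Set (ℕ → S) := {ρ | ∃ k ≤ n, ρ k ∈ B}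

/-- The path event `F≥p B`. -/
def evFge (p : ℕ) (B : Set S) : Set (ℕ → S) := {ρ | ∃ k, p ≤ k ∧ ρ k ∈ B}

/-- The path event `GF B`: visit `B` infinitely often. -/
def evGF (B : Set S) : Set (ℕ → S) := {ρ | ∀ n, ∃ k, n ≤ k ∧ ρ k ∈ B}

/-- The path event `FG B`: eventually stay in `B` forever. -/
def evFG (B : Set S) : Set (ℕ → S) := {ρ | ∃ n, ∀ k, n ≤ k → ρ k ∈ B}

/-- The until event `B' U B`. -/
def evU (B' B : Set S) : Set (ℕ → S) := {ρ | ∃ k, ρ k ∈ B ∧ ∀ j < k, ρ j ∈ B'}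

/-- The bounded until event `B' U≤n B`. -/
def evUle (n : ℕ) (B' B : Set S) : Set (ℕ → S) := {ρ | ∃ k ≤ n, ρ k ∈ B ∧ ∀ j < k, ρ j ∈ B'}

/-- The avoid-set `B̃` of `B`: states from which `B` is reached with probability `0`. -/
def avoid (P : Measure S → Measure (ℕ → S)) (B : Set S) : Set S :=
  {s | P (Measure.dirac s) (evF B) = 0}

/-- `T` is decisive w.r.t. `B` from `μ`. -/
def Decisive (P : Measure S → Measure (ℕ → S)) (μ : Measure S) (B : Set S) : Prop :=
  P μ (evF B ∪ evF (avoid P B)) = 1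

/-- `T` is strongly decisive w.r.t. `B` from `μ`. -/
def StronglyDecisive (P : Measure S → Measure (ℕ → S)) (μ : Measure S) (B : Set S) : Prop :=
  P μ (evGF B ∪ evF (avoid P B)) = 1

/-- `T` is persistently decisive w.r.t. `B` from `μ`. -/
def PersistentlyDecisive (P : Measure S → Measure (ℕ → S)) (μ : Measure S) (B : Set S) : Prop :=
  ∀ p : ℕ, P μ (evFge p B ∪ evFge p (avoid P B)) = 1

/-- `PreProb(B)`: measurable sets `B'` from which `B` is reached in one step with positive
probability, whatever the initial distribution concentrated on `B'`. -/
def PreProb (P : Measure S → Measure (ℕ → S)) (B : Set S) : Set (Set S) :=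
  {B' | MeasurableSet B' ∧ ∀ μ' : Measure S, IsProbabilityMeasure μ' → μ' B' = 1 →
    0 < P μ' {ρ | ρ 0 ∈ B' ∧ ρ 1 ∈ B}}

/-- `T` is fair w.r.t. `B` from `μ`. -/
def Fair (P : Measure S → Measure (ℕ → S)) (μ : Measure S) (B : Set S) : Prop :=
  ∀ B' ∈ PreProb P B, 0 < P μ (evGF B') →
    P μ (evGF B ∩ evGF B') = P μ (evGF B')

/-- The one-step measure transformer `Ω_T`. -/
noncomputable def Omega (κ : Kernel S S) (μ : Measure S) : Measure S :=
  μ.bind (fun s => κ s)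

/-- Two measures are qualitatively equivalent if they have the same null (measurable) sets. -/
def QualEquiv {T : Type*} [MeasurableSpace T] (μ ν : Measure T) : Prop :=
  ∀ A : Set T, MeasurableSet A → (μ A = 0 ↔ ν A = 0)

/-- `T₂ = (S₂,κ₂)` is an `α`-abstraction of `T₁ = (S₁,κ₁)`. -/
def IsAbstraction {S₁ S₂ : Type*} [MeasurableSpace S₁] [MeasurableSpace S₂]
    (κ₁ : Kernel S₁ S₁) (κ₂ : Kernel S₂ S₂) (α : S₁ → S₂) : Prop :=
  ∀ μ : Measure S₁, IsProbabilityMeasure μ →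
    QualEquiv (Measure.map α (Omega κ₁ μ)) (Omega κ₂ (Measure.map α μ))


/-!
Everything rests on a no-return property: almost surely, a path that enters the avoid-set `B̃`
never visits `B` afterwards. Indeed, by the Markov property at time `k`, the
cylinder "in `B̃` at time `k`, outside `B` at times `k+1, …, k+n`" has the same probability as
"in `B̃` at time `k`", because from every state of `B̃` the set `B` is avoided with probability
one. Given no-return (for `B` and, in (iii), for `B̃`), the three equivalences are pointwise
statements about paths, holding outside a null set.
-/

def evFThenF (C B : Set S) : Set (ℕ → S) := {ρ | ∃ k, ρ k ∈ C ∧ ∃ m, k ≤ m ∧ ρ m ∈ B}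

section PathEvents

variable {B C C' : Set S}

lemma measurableSet_cylinder (n : ℕ) {A : ℕ → Set S} (hA : ∀ i, MeasurableSet (A i)) :
    MeasurableSet {ρ : ℕ → S | ∀ i ≤ n, ρ i ∈ A i} := by
  simp only [Set.ofPred_forall]
  exact .iInter fun i => .iInter fun _ => measurable_pi_apply i (hA i)

lemma measurableSet_evF (hB : MeasurableSet B) : MeasurableSet (evF B) := by
  simp only [evF, Set.ofPred_exists]
  exact .iUnion fun k => measurable_pi_apply k hB

lemma measurableSet_evFge (hB : MeasurableSet B) (p : ℕ) : MeasurableSet (evFge p B) := by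
  simp only [evFge, Set.ofPred_exists, Set.ofPred_and]
  exact .iUnion fun k => (MeasurableSet.const _).inter (measurable_pi_apply k hB)

lemma measurableSet_evGF (hB : MeasurableSet B) : MeasurableSet (evGF B) := by
  simp only [evGF, Set.ofPred_forall, Set.ofPred_exists, Set.ofPred_and]
  exact .iInter fun n => .iUnion fun k => (MeasurableSet.const _).inter (measurable_pi_apply k hB)

variable {Q : Measure (ℕ → S)} [IsProbabilityMeasure Q]

lemma prob_evF_eq_one_iff_evU_eq_zero (hB : MeasurableSet B) (hC : MeasurableSet C)
    (hdec : Q (evF B ∪ evF C) = 1) (hret : Q (evFThenF C B) = 0) :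
    Q (evF B) = 1 ↔ Q (evU Bᶜ C) = 0 := by
  rw [← mem_ae_iff_prob_eq_one (measurableSet_evF hB)]
  rw [← mem_ae_iff_prob_eq_one ((measurableSet_evF hB).union (measurableSet_evF hC))] at hdec
  rw [measure_eq_zero_iff_ae_notMem] at hret ⊢
  constructor
  · intro hF
    filter_upwards [hF, hret] with ρ ⟨m, hm⟩ hρ ⟨k, hk, hbefore⟩
    exact hρ ⟨k, hk, m, not_lt.1 fun hmk => hbefore m hmk hm, hm⟩
  · intro hU
    filter_upwards [hdec, hU] with ρ hρ hρU
    by_contra hF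
    obtain ⟨k, hk⟩ := hρ.resolve_left hF
    exact hρU ⟨k, hk, fun j _ hj => hF ⟨j, hj⟩⟩

lemma prob_evGF_eq_one_iff_evF_eq_zero (hB : MeasurableSet B) (hC : MeasurableSet C)
    (hdec : Q (evGF B ∪ evF C) = 1) (hret : Q (evFThenF C B) = 0) :
    Q (evGF B) = 1 ↔ Q (evF C) = 0 := by
  rw [← mem_ae_iff_prob_eq_one (measurableSet_evGF hB)]
  rw [← mem_ae_iff_prob_eq_one ((measurableSet_evGF hB).union (measurableSet_evF hC))] at hdec
  rw [measure_eq_zero_iff_ae_notMem] at hret ⊢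
  constructor
  · intro hGF
    filter_upwards [hGF, hret] with ρ hρ hρret ⟨k, hk⟩
    obtain ⟨m, hkm, hm⟩ := hρ k
    exact hρret ⟨k, hk, m, hkm, hm⟩
  · intro hF
    filter_upwards [hdec, hF] with ρ hρ hρF using hρ.resolve_right hρF

lemma evGF_pos_of_evF_pos (hB : MeasurableSet B) (hC : MeasurableSet C)
    (hpdec : ∀ p, Q (evFge p B ∪ evFge p C) = 1) (hret : Q (evFThenF C' C) = 0)
    (hpos : 0 < Q (evF C')) : 0 < Q (evGF B) := by
  simp only [← mem_ae_iff_prob_eq_one ((measurableSet_evFge hB _).union (measurableSet_evFge hC _))]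
    at hpdec
  rw [measure_eq_zero_iff_ae_notMem] at hret
  rw [pos_iff_ne_zero, Ne, measure_eq_zero_iff_ae_notMem] at hpos ⊢
  refine fun hGF => hpos ?_
  filter_upwards [ae_all_iff.2 hpdec, hret, hGF] with ρ hρ hρret hρGF ⟨k, hk⟩
  obtain ⟨n, hn⟩ : ∃ n, ∀ m, n ≤ m → ρ m ∉ B := by simpa [evGF] using hρGF
  rcases hρ (max k n) with ⟨m, hm, hmB⟩ | ⟨m, hm, hmC⟩
  · exact hn m (le_of_max_le_right hm) hmB
  · exact hρret ⟨k, hk, m, le_of_max_le_left hm, hmC⟩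

lemma evF_pos_of_evGF_pos (hC : MeasurableSet C) (hC' : MeasurableSet C')
    (hdec : Q (evF C ∪ evF C') = 1) (hret : Q (evFThenF C B) = 0)
    (hpos : 0 < Q (evGF B)) : 0 < Q (evF C') := by
  rw [← mem_ae_iff_prob_eq_one ((measurableSet_evF hC).union (measurableSet_evF hC'))] at hdec
  rw [measure_eq_zero_iff_ae_notMem] at hret
  rw [pos_iff_ne_zero, Ne, measure_eq_zero_iff_ae_notMem] at hpos ⊢
  refine fun hF => hpos ?_
  filter_upwards [hdec, hret, hF] with ρ hρ hρret hρF hρGF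
  obtain ⟨k, hk⟩ := hρ.resolve_right hρF
  obtain ⟨m, hkm, hm⟩ := hρGF k
  exact hρret ⟨k, hk, m, hkm, hm⟩

end PathEvents

section Cylinders

variable (κ : Kernel S S)

lemma measurable_cylProb (η : Kernel S S) (n : ℕ) {A : ℕ → Set S}
    (hA : ∀ i, MeasurableSet (A i)) : Measurable fun s => cylProb κ n (η s) A := by
  induction n generalizing η A with
  | zero => exact η.measurable_coe (hA 0)
  | succ n ih =>
    simp only [cylProb, ← lintegral_indicator (hA 0)]
    exact ((ih κ fun i => hA (i + 1)).indicator (hA 0)).lintegral_kernel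

lemma cylProb_succ_dirac {n : ℕ} {A : ℕ → Set S} (hA : ∀ i, MeasurableSet (A i)) {s : S}
    (hs : s ∈ A 0) :
    cylProb κ (n + 1) (Measure.dirac s) A = cylProb κ n (κ s) fun i => A (i + 1) := by
  classical
  rw [cylProb, setLIntegral_dirac' (measurable_cylProb κ κ n fun i => hA (i + 1)) (hA 0),
    if_pos hs]

lemma cylProb_bind (n : ℕ) (μ : Measure S) {A : ℕ → Set S} (hA : ∀ i, MeasurableSet (A i)) :
    cylProb κ n (μ.bind κ) A = ∫⁻ s, cylProb κ n (κ s) A ∂μ := by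
  cases n with
  | zero => exact Measure.bind_apply (hA 0) κ.aemeasurable
  | succ n =>
    have hf := (measurable_cylProb κ κ n fun i => hA (i + 1)).indicator (hA 0)
    simp only [cylProb, ← lintegral_indicator (hA 0)]
    exact Measure.lintegral_bind κ.aemeasurable hf.aemeasurable

lemma cylProb_succ_of_head_univ (n : ℕ) (μ : Measure S) {A : ℕ → Set S}
    (hA : ∀ i, MeasurableSet (A i)) (h0 : A 0 = Set.univ) :
    cylProb κ (n + 1) μ A = cylProb κ n (Omega κ μ) fun i => A (i + 1) := by
  rw [Omega, cylProb_bind κ n μ fun i => hA (i + 1), cylProb, h0, Measure.restrict_univ]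

lemma cylProb_add_of_prefix_univ (k n : ℕ) (μ : Measure S) {A : ℕ → Set S}
    (hA : ∀ i, MeasurableSet (A i)) (hprefix : ∀ i < k, A i = Set.univ) :
    cylProb κ (k + n) μ A = cylProb κ n ((Omega κ)^[k] μ) fun i => A (i + k) := by
  induction k generalizing μ A with
  | zero => simp
  | succ k ih =>
    rw [Nat.add_right_comm, cylProb_succ_of_head_univ κ _ μ hA (hprefix 0 k.succ_pos),
      ih _ (fun i => hA (i + 1)) fun i hi => hprefix (i + 1) (by omega)]
    rfl

end Cylinders

def enterAt {α : Type*} (k : ℕ) (C D : Set α) (i : ℕ) : Set α :=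
  if i < k then .univ else if i = k then C else D

lemma measurableSet_enterAt (k : ℕ) {C D : Set S} (hC : MeasurableSet C) (hD : MeasurableSet D)
    (i : ℕ) : MeasurableSet (enterAt k C D i) := by
  unfold enterAt
  split_ifs
  exacts [.univ, hC, hD]

lemma enterAt_add {α : Type*} (k : ℕ) (C D : Set α) :
    (fun i => enterAt k C D (i + k)) = enterAt 0 C D := by
  funext i
  simp only [enterAt]
  split_ifs <;> first | rfl | omega

section Avoid

variable {κ : Kernel S S} {P : Measure S → Measure (ℕ → S)} {B : Set S}

lemma measure_evF_eq_zero_iff (hP : IsPathMeasure κ P) (hB : MeasurableSet B)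
    (ν : Measure S) [hν : IsProbabilityMeasure ν] :
    P ν (evF B) = 0 ↔ ∀ n, cylProb κ n ν (fun _ => Bᶜ) = 1 := by
  have : IsProbabilityMeasure (P ν) := (hP ν hν).1
  have hF : evF B = ⋃ n, {ρ : ℕ → S | ∀ i ≤ n, ρ i ∈ Bᶜ}ᶜ := by
    ext ρ
    simp only [evF, Set.mem_ofPred_eq, Set.mem_iUnion, Set.mem_compl_iff, not_forall, not_not]
    exact ⟨fun ⟨k, hk⟩ => ⟨k, k, le_rfl, hk⟩, fun ⟨_, k, _, hk⟩ => ⟨k, hk⟩⟩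
  rw [hF, measure_iUnion_null_iff]
  refine forall_congr' fun n => ?_
  rw [prob_compl_eq_zero_iff (measurableSet_cylinder n fun _ => hB.compl),
    (hP ν hν).2 n _ fun _ => hB.compl]

lemma mem_avoid_iff (hP : IsPathMeasure κ P) (hB : MeasurableSet B) {s : S} :
    s ∈ avoid P B ↔ ∀ n, cylProb κ n (Measure.dirac s) (fun _ => Bᶜ) = 1 :=
  measure_evF_eq_zero_iff hP hB _

lemma measurableSet_avoid (hP : IsPathMeasure κ P) (hB : MeasurableSet B) :
    MeasurableSet (avoid P B) := by
  have h : avoid P B = ⋂ n, (fun s => cylProb κ n (Kernel.id s) (fun _ => Bᶜ)) ⁻¹' {1} := by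
    ext s
    simp [mem_avoid_iff hP hB, Kernel.id_apply]
  rw [h]
  exact .iInter fun n =>
    measurable_cylProb κ Kernel.id n (fun _ => hB.compl) (measurableSet_singleton 1)

lemma avoid_subset_compl (hP : IsPathMeasure κ P) (hB : MeasurableSet B) :
    avoid P B ⊆ Bᶜ := fun s hs => by
  have h0 := (mem_avoid_iff hP hB).1 hs 0
  by_contra hsB
  simp [cylProb, Measure.dirac_apply' _ hB.compl, hsB] at h0

lemma cylProb_eq_one_of_mem_avoid (hP : IsPathMeasure κ P) (hB : MeasurableSet B) {s : S}
    (hs : s ∈ avoid P B) (n : ℕ) : cylProb κ n (κ s) (fun _ => Bᶜ) = 1 := by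
  rw [← cylProb_succ_dirac κ (fun _ => hB.compl) (avoid_subset_compl hP hB hs)]
  exact (mem_avoid_iff hP hB).1 hs (n + 1)

lemma cylProb_enterAt_zero_avoid (hP : IsPathMeasure κ P) (hB : MeasurableSet B)
    (ν : Measure S) (n : ℕ) : cylProb κ n ν (enterAt 0 (avoid P B) Bᶜ) = ν (avoid P B) := by
  cases n with
  | zero => rfl
  | succ n =>
    simp only [cylProb, enterAt, Nat.not_lt_zero, if_true, if_false, Nat.add_one_ne_zero]
    rw [setLIntegral_congr_fun (measurableSet_avoid hP hB)
      fun s hs => cylProb_eq_one_of_mem_avoid hP hB hs n, setLIntegral_one]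

lemma measure_cylinder_enterAt_avoid (hP : IsPathMeasure κ P) (hB : MeasurableSet B)
    (μ : Measure S) [hμ : IsProbabilityMeasure μ] (k n : ℕ) :
    P μ {ρ | ∀ i ≤ k + n, ρ i ∈ enterAt k (avoid P B) Bᶜ i} = (Omega κ)^[k] μ (avoid P B) := by
  have hA := measurableSet_enterAt k (measurableSet_avoid hP hB) hB.compl
  rw [(hP μ hμ).2 _ _ hA, cylProb_add_of_prefix_univ κ k n μ hA fun i hi => if_pos hi,
    enterAt_add, cylProb_enterAt_zero_avoid hP hB]

lemma measure_evFThenF_avoid_eq_zero (hP : IsPathMeasure κ P) (hB : MeasurableSet B)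
    (μ : Measure S) [hμ : IsProbabilityMeasure μ] :
    P μ (evFThenF (avoid P B) B) = 0 := by
  have : IsProbabilityMeasure (P μ) := (hP μ hμ).1
  set A := fun k => enterAt k (avoid P B) Bᶜ
  have hdiff : ∀ k n,
      P μ ({ρ | ∀ i ≤ k + 0, ρ i ∈ A k i} \ {ρ | ∀ i ≤ k + n, ρ i ∈ A k i}) = 0 := by
    intro k n
    rw [measure_sdiff (Set.ofPred_subset_ofPred.2 fun ρ h i hi => h i (by omega))
      (measurableSet_cylinder _ (measurableSet_enterAt k (measurableSet_avoid hP hB)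
        hB.compl)).nullMeasurableSet (measure_ne_top _ _),
      measure_cylinder_enterAt_avoid hP hB, measure_cylinder_enterAt_avoid hP hB, tsub_self]
  refine measure_mono_null ?_ (measure_iUnion_null fun k => measure_iUnion_null (hdiff k))
  rintro ρ ⟨k, hk, m, hkm, hm⟩
  have hkm : k < m := hkm.lt_of_ne fun h => avoid_subset_compl hP hB hk (h ▸ hm)
  simp only [Set.mem_iUnion, Set.mem_sdiff, Set.mem_ofPred_eq]
  refine ⟨k, m - k, fun i hi => ?_, fun h => ?_⟩
  · simp only [A, enterAt]
    split_ifs with hik hik'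
    exacts [trivial, hik' ▸ hk, absurd hi (by omega)]
  · have hmA := h m (by omega)
    simp only [A, enterAt, if_neg (show ¬m < k by omega), if_neg hkm.ne'] at hmA
    exact hmA hm

end Avoid

theorem statement_17_general {S : Type*} [MeasurableSpace S]
    (κ : Kernel S S)
    (P : Measure S → Measure (ℕ → S)) (hP : IsPathMeasure κ P)
    (μ : Measure S) (hμ : IsProbabilityMeasure μ)
    (B : Set S) (hB : MeasurableSet B) :
    (Decisive P μ B →
      (P μ (evF B) = 1 ↔ P μ (evU Bᶜ (avoid P B)) = 0)) ∧
    (StronglyDecisive P μ B →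
      (P μ (evGF B) = 1 ↔ P μ (evF (avoid P B)) = 0)) ∧
    (Decisive P μ (avoid P B) → PersistentlyDecisive P μ B →
      (0 < P μ (evGF B) ↔ 0 < P μ (evF (avoid P (avoid P B))))) := by
  have : IsProbabilityMeasure (P μ) := (hP μ hμ).1
  have hB' : MeasurableSet (avoid P B) := measurableSet_avoid hP hB
  have hret : P μ (evFThenF (avoid P B) B) = 0 := measure_evFThenF_avoid_eq_zero hP hB μ
  refine ⟨fun hD => prob_evF_eq_one_iff_evU_eq_zero hB hB' hD hret,
    fun hSD => prob_evGF_eq_one_iff_evF_eq_zero hB hB' hSD hret, fun hD hPD => ⟨?_, ?_⟩⟩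
  · exact evF_pos_of_evGF_pos hB' (measurableSet_avoid hP hB') hD hret
  · exact evGF_pos_of_evF_pos hB hB' hPD (measure_evFThenF_avoid_eq_zero hP hB' μ)

/-- qualitative analysis of (repeated) reachability under decisiveness:
(i) under `D(μ,B)`: `Prob_μ(F B) = 1 ↔ Prob_μ((S∖B) U B̃) = 0`;
(ii) under `SD(μ,B)`: `Prob_μ(GF B) = 1 ↔ Prob_μ(F B̃) = 0`;
(iii) under `D(μ,B̃)` and `PD(μ,B)`: `Prob_μ(GF B) > 0 ↔ Prob_μ(F B̃̃) > 0`. -/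
theorem statement_17 {S : Type*} [MeasurableSpace S]
    (κ : Kernel S S) [IsMarkovKernel κ]
    (P : Measure S → Measure (ℕ → S)) (hP : IsPathMeasure κ P)
    (μ : Measure S) (hμ : IsProbabilityMeasure μ)
    (B : Set S) (hB : MeasurableSet B) :
    (Decisive P μ B →
      (P μ (evF B) = 1 ↔ P μ (evU Bᶜ (avoid P B)) = 0)) ∧
    (StronglyDecisive P μ B →
      (P μ (evGF B) = 1 ↔ P μ (evF (avoid P B)) = 0)) ∧
    (Decisive P μ (avoid P B) → PersistentlyDecisive P μ B →
      (0 < P μ (evGF B) ↔ 0 < P μ (evF (avoid P (avoid P B))))) :=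
  statement_17_general κ P hP μ hμ B hB

end STS
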